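/- Let σx := !![0,1;1,0] and σz := !![1,0;0,−1] as matrices in Matrix (Fin 2) (Fin 2) ℂ, and on ℂ⁴ (index type Fin 2 × Fin 2, via the Kronecker product ⊗ₖ) set X₁ := σx ⊗ₖ 1, X₂ := 1 ⊗ₖ σx, Z := σz ⊗ₖ σz, and for θ : ℝ let U θ := Matrix.exp ((Complex.I·θ)•Z) and Θ θ := X₁·(U θ·X₂) − (U θ·X₂)·X₁. Then for all θ : ℝ, (Θ θ)ᴴ · (Θ θ) = ((4·(Real.sin θ)² : ℝ) : ℂ) • (1 : Matrix (Fin 2 × Fin 2) (Fin 2 × Fin 2) ℂ). -/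

import Mathlib

/-! Since `Z` is diagonal with entries `±1`, `U θ = cos θ • 1 + i sin θ • Z`. The probe `X₁` commutes
with `X₂` and anticommutes with `Z`, so the commutator collapses to `Θ θ = -2i sin θ • (Z X₁ X₂)`, a
scalar multiple of a unitary; hence `(Θ θ)ᴴ Θ θ = |2 sin θ|² • 1`. -/

open Matrix Kronecker NormedSpace

noncomputable section

def σx : Matrix (Fin 2) (Fin 2) ℂ := !![0, 1; 1, 0]
def σz : Matrix (Fin 2) (Fin 2) ℂ := !![1, 0; 0, -1]
def X₁ : Matrix (Fin 2 × Fin 2) (Fin 2 × Fin 2) ℂ := σx ⊗ₖ 1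
def X₂ : Matrix (Fin 2 × Fin 2) (Fin 2 × Fin 2) ℂ := (1 : Matrix (Fin 2) (Fin 2) ℂ) ⊗ₖ σx
def Z : Matrix (Fin 2 × Fin 2) (Fin 2 × Fin 2) ℂ := σz ⊗ₖ σz
def U (θ : ℝ) : Matrix (Fin 2 × Fin 2) (Fin 2 × Fin 2) ℂ := exp ((Complex.I * θ) • Z)

def Θ (θ : ℝ) : Matrix (Fin 2 × Fin 2) (Fin 2 × Fin 2) ℂ :=
  X₁ * (U θ * X₂) - (U θ * X₂) * X₁

lemma IsSelfAdjoint.mem_unitary_of_mul_self {R : Type*} [Monoid R] [StarMul R] {a : R}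
    (ha : IsSelfAdjoint a) (h : a * a = 1) : a ∈ unitary R :=
  Unitary.mem_iff.mpr ⟨by rw [ha.star_eq, h], by rw [ha.star_eq, h]⟩

lemma σx_mem_unitary : σx ∈ unitary (Matrix (Fin 2) (Fin 2) ℂ) := by
  refine IsSelfAdjoint.mem_unitary_of_mul_self ?_ ?_ <;>
    ext i j <;> fin_cases i <;> fin_cases j <;> simp [σx, one_apply]

lemma σz_mem_unitary : σz ∈ unitary (Matrix (Fin 2) (Fin 2) ℂ) := by
  refine IsSelfAdjoint.mem_unitary_of_mul_self ?_ ?_ <;>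
    ext i j <;> fin_cases i <;> fin_cases j <;> simp [σz, one_apply]

lemma Complex.exp_mul_I_mul_of_sq_eq_one {d : ℂ} (hd : d ^ 2 = 1) (t : ℂ) :
    Complex.exp (t * Complex.I * d) = Complex.cos t + Complex.sin t * Complex.I * d := by
  rcases sq_eq_one_iff.mp hd with rfl | rfl
  · simp [Complex.exp_mul_I]
  · simp [← neg_mul, Complex.exp_mul_I]

lemma Matrix.exp_smul_diagonal_of_sq_eq_one {n : Type*} [Fintype n] [DecidableEq n] {d : n → ℂ}
    (hd : ∀ i, d i ^ 2 = 1) (t : ℂ) :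
    exp ((t * Complex.I) • diagonal d) =
      Complex.cos t • 1 + (Complex.sin t * Complex.I) • diagonal d := by
  rw [← diagonal_smul, exp_diagonal, Pi.exp_def]
  ext i j
  rcases eq_or_ne i j with rfl | h
  · simp [← Complex.exp_eq_exp_ℂ, Complex.exp_mul_I_mul_of_sq_eq_one (hd i)]
  · simp [h]

lemma commutator_smul_one_add_smul_mul {R A : Type*} [CommRing R] [Ring A] [Algebra R A]
    {x y z : A} (hxy : Commute x y) (hxz : x * z + z * x = 0) (a b : R) :
    x * ((a • 1 + b • z) * y) - (a • 1 + b • z) * y * x = (-2 * b) • (z * x * y) := by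
  have hzx : x * z = -(z * x) := eq_neg_of_add_eq_zero_left hxz
  simp only [add_mul, mul_add, smul_mul_assoc, mul_smul_comm, one_mul, ← mul_assoc, hzx, neg_mul]
  rw [mul_assoc z y x, ← hxy.eq, ← mul_assoc]
  module

lemma star_smul_mul_smul_of_mem_unitary {A : Type*} [Ring A] [StarRing A] [Algebra ℂ A]
    [StarModule ℂ A] {u : A} (hu : u ∈ unitary A) (c : ℂ) :
    star (c • u) * (c • u) = (Complex.normSq c : ℂ) • 1 := by
  rw [star_smul, smul_mul_smul_comm, Unitary.star_mul_self_of_mem hu,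
    Complex.normSq_eq_conj_mul_self]
  rfl

lemma X₁_commute_X₂ : Commute X₁ X₂ := by
  simp only [Commute, SemiconjBy, X₁, X₂, ← mul_kronecker_mul, one_mul, mul_one]

lemma X₁_mul_Z_add_Z_mul_X₁ : X₁ * Z + Z * X₁ = 0 := by
  have : σx * σz + σz * σx = 0 := by ext i j; fin_cases i <;> fin_cases j <;> simp [σx, σz]
  simp only [X₁, Z, ← mul_kronecker_mul, one_mul, mul_one, ← add_kronecker, this, zero_kronecker]

lemma Z_eq_diagonal :
    Z = diagonal fun p : Fin 2 × Fin 2 => ![(1 : ℂ), -1] p.1 * ![1, -1] p.2 := by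
  have : σz = diagonal ![1, -1] := by ext i j; fin_cases i <;> fin_cases j <;> rfl
  rw [Z, this, diagonal_kronecker_diagonal]

lemma U_eq_cos_smul_one_add_sin_smul_Z (θ : ℝ) :
    U θ = Complex.cos θ • 1 + (Complex.sin θ * Complex.I) • Z := by
  have hd : ∀ i, ![(1 : ℂ), -1] i ^ 2 = 1 := by intro i; fin_cases i <;> norm_num
  rw [U, mul_comm, Z_eq_diagonal, Matrix.exp_smul_diagonal_of_sq_eq_one]
  intro p
  rw [mul_pow, hd, hd, one_mul]

lemma Θ_eq_smul (θ : ℝ) : Θ θ = (-2 * (Complex.sin θ * Complex.I)) • (Z * X₁ * X₂) := by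
  rw [Θ, U_eq_cos_smul_one_add_sin_smul_Z,
    commutator_smul_one_add_smul_mul X₁_commute_X₂ X₁_mul_Z_add_Z_mul_X₁]

lemma Z_mul_X₁_mul_X₂_mem_unitary :
    Z * X₁ * X₂ ∈ unitary (Matrix (Fin 2 × Fin 2) (Fin 2 × Fin 2) ℂ) := by
  have hone := one_mem (unitary (Matrix (Fin 2) (Fin 2) ℂ))
  exact mul_mem (mul_mem (kronecker_mem_unitary σz_mem_unitary σz_mem_unitary)
    (kronecker_mem_unitary σx_mem_unitary hone)) (kronecker_mem_unitary hone σx_mem_unitary)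

/-- Closed form underlying Lemma B.3(1): `Θ† Θ = 4 sin² θ · 𝟙`. -/
theorem squared_commutator_closed_form (θ : ℝ) :
    (Θ θ)ᴴ * Θ θ =
      ((4 * Real.sin θ ^ 2 : ℝ) : ℂ) • (1 : Matrix (Fin 2 × Fin 2) (Fin 2 × Fin 2) ℂ) := by
  rw [← star_eq_conjTranspose, Θ_eq_smul,
    star_smul_mul_smul_of_mem_unitary Z_mul_X₁_mul_X₂_mem_unitary, ← Complex.ofReal_sin]
  congr 2
  simp only [Complex.normSq_mul, Complex.normSq_neg, Complex.normSq_ofReal, Complex.normSq_I,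
    Complex.normSq_ofNat]
  ring

end
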